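/- arXiv:2203.01990 — 4 statements merged into one kernel-verified Lean document; each statement's English description precedes it below -/
import Mathlib

section
/- If X and Y are random variables with joint density f_{XY} and marginals f_X, f_Y, and P(f_{XY}(X,Y) > f_X(X)f_Y(Y)) = 0, then X and Y are independent; conversely independence implies this probability is 0. That is, aLDG_0 = 0 if and only if X ⊥ Y. -/
open MeasureTheory

/-- `aLDG_0 = 0` if and only if `X ⊥ Y`: for densities `f_{XY}, f_X, f_Y`,
the probability (under the joint law) that `f_{XY}(X,Y) > f_X(X) f_Y(Y)` is zero
iff `f_{XY} = f_X f_Y` Lebesgue-almost everywhere. -/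
theorem stmt_1
    (fXY : ℝ × ℝ → ℝ) (fX fY : ℝ → ℝ)
    (hfXY : Measurable fXY) (hfX : Measurable fX) (hfY : Measurable fY)
    (hfXY0 : ∀ p, 0 ≤ fXY p) (hfX0 : ∀ x, 0 ≤ fX x) (hfY0 : ∀ y, 0 ≤ fY y)
    (hXYint : ∫ p, fXY p = 1) (hXint : ∫ x, fX x = 1) (hYint : ∫ y, fY y = 1)
    (hmargX : ∀ᵐ x ∂(volume : Measure ℝ), ∫ y, fXY (x, y) = fX x)
    (hmargY : ∀ᵐ y ∂(volume : Measure ℝ), ∫ x, fXY (x, y) = fY y)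
    (μ : Measure (ℝ × ℝ))
    (hμ : μ = (volume : Measure (ℝ × ℝ)).withDensity (fun p => ENNReal.ofReal (fXY p))) :
    μ {p : ℝ × ℝ | fXY p > fX p.1 * fY p.2} = 0 ↔
      (∀ᵐ p ∂(volume : Measure (ℝ × ℝ)), fXY p = fX p.1 * fY p.2) := by
  subst hμ
  have hgmeas : Measurable (fun p : ℝ × ℝ => fX p.1 * fY p.2) :=
    (hfX.comp measurable_fst).mul (hfY.comp measurable_snd)
  have hS : MeasurableSet {p : ℝ × ℝ | fXY p > fX p.1 * fY p.2} :=
    measurableSet_lt hgmeas hfXY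
  constructor
  · intro h0
    rw [withDensity_apply _ hS] at h0
    have h1 : (fun p => ENNReal.ofReal (fXY p))
        =ᵐ[(volume : Measure (ℝ × ℝ)).restrict {p : ℝ × ℝ | fXY p > fX p.1 * fY p.2}] 0 :=
      (lintegral_eq_zero_iff hfXY.ennreal_ofReal).mp h0
    have h2 : ∀ᵐ p ∂(volume : Measure (ℝ × ℝ)), fXY p ≤ fX p.1 * fY p.2 := by
      have h1' := (ae_restrict_iff' hS).mp h1
      filter_upwards [h1'] with p hp
      by_contra hlt
      push_neg at hlt
      have h3 : ENNReal.ofReal (fXY p) = 0 := hp hlt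
      rw [ENNReal.ofReal_eq_zero] at h3
      have hpos : 0 < fXY p := lt_of_le_of_lt (mul_nonneg (hfX0 _) (hfY0 _)) hlt
      linarith
    have hXYi : Integrable fXY := by
      by_contra hni; rw [integral_undef hni] at hXYint; norm_num at hXYint
    have hXi : Integrable fX := by
      by_contra hni; rw [integral_undef hni] at hXint; norm_num at hXint
    have hYi : Integrable fY := by
      by_contra hni; rw [integral_undef hni] at hYint; norm_num at hYint
    have hgi : Integrable (fun p : ℝ × ℝ => fX p.1 * fY p.2) := by
      rw [Measure.volume_eq_prod]; exact hXi.mul_prod hYi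
    have hgint : ∫ p : ℝ × ℝ, fX p.1 * fY p.2 = 1 := by
      rw [Measure.volume_eq_prod, integral_prod_mul, hXint, hYint]; norm_num
    have hdiff : ∫ p : ℝ × ℝ, (fX p.1 * fY p.2 - fXY p) = 0 := by
      rw [integral_sub hgi hXYi, hgint, hXYint]; ring
    have hnn : 0 ≤ᵐ[(volume : Measure (ℝ × ℝ))] fun p => fX p.1 * fY p.2 - fXY p := by
      filter_upwards [h2] with p hp
      simp only [Pi.zero_apply, sub_nonneg]; exact hp
    have hz := (integral_eq_zero_iff_of_nonneg_ae hnn (hgi.sub hXYi)).mp hdiff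
    filter_upwards [hz] with p hp
    have : fX p.1 * fY p.2 - fXY p = 0 := hp
    linarith
  · intro h
    have hvol0 : (volume : Measure (ℝ × ℝ)) {p : ℝ × ℝ | fXY p > fX p.1 * fY p.2} = 0 := by
      refine measure_mono_null (fun p hp => ?_) (ae_iff.mp h)
      simp only [Set.mem_setOf_eq] at hp ⊢
      exact ne_of_gt hp
    exact (withDensity_absolutelyContinuous volume _) hvol0
end

section
/- Let t > 0 and let F be a bivariate distribution with densities f_{XY}, f_X, f_Y such that f_max := sup_{x,y} sqrt(f_X(x)f_Y(y)) < ∞ and |aLDG_{t-ε} - aLDG_t| ≤ Lε for all ε > 0. Then the gross error sensitivity of aLDG_t at F is bounded: GES(aLDG_t, F) ≤ L·f_max + 1 < ∞. -/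
open MeasureTheory Filter

/-- Gross error sensitivity of `aLDG_t` is bounded: under a bound
`sqrt (f_X f_Y) ≤ fmax` and the Lipschitz condition `|aLDG_{t-ε} - aLDG_t| ≤ L ε`,
any limit `l` of the influence-function ratio at a contamination point `(x', y')`
satisfies `|l| ≤ L * fmax + 1`; the bound is uniform over contamination points. -/
theorem stmt_3
    (fXY : ℝ × ℝ → ℝ) (fX fY : ℝ → ℝ)
    (μ : Measure (ℝ × ℝ)) [IsProbabilityMeasure μ]
    (hμ : μ = (volume : Measure (ℝ × ℝ)).withDensity (fun p => ENNReal.ofReal (fXY p)))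
    (t L fmax : ℝ) (ht : 0 < t) (hL : 0 ≤ L)
    (hfmax : ∀ x y, Real.sqrt (fX x * fY y) ≤ fmax)
    (aLDG : ℝ → ℝ)
    (haLDG : ∀ s : ℝ, aLDG s =
      (μ {p : ℝ × ℝ | (fXY p - fX p.1 * fY p.2) / Real.sqrt (fX p.1 * fY p.2) > s}).toReal)
    (hLip : ∀ ε : ℝ, 0 < ε → |aLDG (t - ε) - aLDG t| ≤ L * ε)
    (aLDGc : ℝ → ℝ × ℝ → ℝ)
    (haLDGc : ∀ (ε : ℝ) (q : ℝ × ℝ), aLDGc ε q =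
      (((ENNReal.ofReal (1 - ε)) • μ + (ENNReal.ofReal ε) • Measure.dirac q)
        {p : ℝ × ℝ | p = q ∨
          ((1 - ε) * (fXY p - fX p.1 * fY p.2 + ε * (fX p.1 * fY p.2))) /
            Real.sqrt (((1 - ε) * fX p.1) * ((1 - ε) * fY p.2)) > t}).toReal) :
    ∀ (q : ℝ × ℝ) (l : ℝ),
      Tendsto (fun ε : ℝ => (aLDGc ε q - aLDG t) / ε) (nhdsWithin 0 (Set.Ioi 0)) (nhds l) →
      |l| ≤ L * fmax + 1 := by
  intro q l hl
  have hfmax0 : (0:ℝ) ≤ fmax := le_trans (Real.sqrt_nonneg _) (hfmax 0 0)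
  have hμq : μ ({q} : Set (ℝ × ℝ)) = 0 := by
    rw [hμ]
    exact (withDensity_absolutelyContinuous _ _) (measure_singleton q)
  -- u p := (fX fY)/sqrt(fX fY) is in [0, fmax]
  set u : ℝ × ℝ → ℝ := fun p => (fX p.1 * fY p.2) / Real.sqrt (fX p.1 * fY p.2) with hu
  have hu0 : ∀ p, 0 ≤ u p := by
    intro p
    by_cases h : 0 ≤ fX p.1 * fY p.2
    · exact div_nonneg h (Real.sqrt_nonneg _)
    · simp only [hu, Real.sqrt_eq_zero'.mpr (le_of_not_ge h), div_zero, le_refl]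
  have hufm : ∀ p, u p ≤ fmax := by
    intro p
    by_cases h : 0 ≤ fX p.1 * fY p.2
    · simp only [hu, Real.div_sqrt]
      exact hfmax _ _
    · simp only [hu, Real.sqrt_eq_zero'.mpr (le_of_not_ge h), div_zero]
      exact hfmax0
  have key : ∀ ε : ℝ, ε ∈ Set.Ioo (0:ℝ) 1 → |(aLDGc ε q - aLDG t) / ε| ≤ L * fmax + 1 := by
    intro ε hε
    obtain ⟨hε0, hε1⟩ := hε
    have h1ε : (0:ℝ) < 1 - ε := by linarith
    -- rewrite the contaminated condition
    have hcond : ∀ p : ℝ × ℝ,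
        ((1 - ε) * (fXY p - fX p.1 * fY p.2 + ε * (fX p.1 * fY p.2))) /
          Real.sqrt (((1 - ε) * fX p.1) * ((1 - ε) * fY p.2)) =
        (fXY p - fX p.1 * fY p.2) / Real.sqrt (fX p.1 * fY p.2) + ε * u p := by
      intro p
      have hs : Real.sqrt (((1 - ε) * fX p.1) * ((1 - ε) * fY p.2))
          = (1 - ε) * Real.sqrt (fX p.1 * fY p.2) := by
        rw [show ((1 - ε) * fX p.1) * ((1 - ε) * fY p.2)
            = (1 - ε) ^ 2 * (fX p.1 * fY p.2) by ring,
          Real.sqrt_mul (sq_nonneg _), Real.sqrt_sq h1ε.le]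
      rw [hs, mul_div_mul_left _ _ (ne_of_gt h1ε), add_div, hu, mul_div_assoc]
    set S : Set (ℝ × ℝ) := {p : ℝ × ℝ | p = q ∨
        ((1 - ε) * (fXY p - fX p.1 * fY p.2 + ε * (fX p.1 * fY p.2))) /
          Real.sqrt (((1 - ε) * fX p.1) * ((1 - ε) * fY p.2)) > t} with hS
    have hsub1 : {p : ℝ × ℝ | (fXY p - fX p.1 * fY p.2) / Real.sqrt (fX p.1 * fY p.2) > t}
        ⊆ S := by
      intro p hp
      right
      rw [hcond p]
      have : 0 ≤ ε * u p := mul_nonneg hε0.le (hu0 p)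
      simp only [Set.mem_setOf_eq] at hp
      linarith
    have hsub2 : S ⊆ {q} ∪ {p : ℝ × ℝ |
        (fXY p - fX p.1 * fY p.2) / Real.sqrt (fX p.1 * fY p.2) > t - ε * fmax} := by
      intro p hp
      rcases hp with h | h
      · exact Or.inl h
      · right
        rw [hcond p] at h
        have : ε * u p ≤ ε * fmax := mul_le_mul_of_nonneg_left (hufm p) hε0.le
        simp only [Set.mem_setOf_eq]
        linarith
    -- measure bounds
    have hm1 : aLDG t ≤ (μ S).toReal := by
      rw [haLDG t]
      exact ENNReal.toReal_mono (measure_ne_top μ S) (measure_mono hsub1)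
    have hm2 : (μ S).toReal ≤ aLDG (t - ε * fmax) := by
      rw [haLDG (t - ε * fmax)]
      refine ENNReal.toReal_mono (measure_ne_top μ _) ?_
      calc μ S ≤ μ ({q} ∪ {p : ℝ × ℝ |
          (fXY p - fX p.1 * fY p.2) / Real.sqrt (fX p.1 * fY p.2) > t - ε * fmax}) :=
            measure_mono hsub2
        _ ≤ μ {q} + μ {p : ℝ × ℝ |
            (fXY p - fX p.1 * fY p.2) / Real.sqrt (fX p.1 * fY p.2) > t - ε * fmax} :=
            measure_union_le _ _
        _ = _ := by rw [hμq, zero_add]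
    have hstep : aLDG (t - ε * fmax) ≤ aLDG t + L * (ε * fmax) := by
      rcases eq_or_lt_of_le hfmax0 with h0 | h0
      · simp [← h0]
      · have h := abs_le.mp (hLip (ε * fmax) (by positivity))
        linarith [h.1]
    have hm3 : (μ S).toReal ≤ 1 := by
      simpa using ENNReal.toReal_mono (by simp) (prob_le_one (μ := μ) (s := S))
    have hm0 : 0 ≤ aLDG t := by rw [haLDG t]; exact ENNReal.toReal_nonneg
    -- value of aLDGc
    have hdq : Measure.dirac q S = 1 := Measure.dirac_apply_of_mem (Or.inl rfl)
    have hval : aLDGc ε q = (1 - ε) * (μ S).toReal + ε := by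
      rw [haLDGc ε q, ← hS, Measure.add_apply, Measure.smul_apply, Measure.smul_apply,
        smul_eq_mul, smul_eq_mul, hdq, mul_one,
        ENNReal.toReal_add (ENNReal.mul_ne_top ENNReal.ofReal_ne_top (measure_ne_top μ S))
          ENNReal.ofReal_ne_top,
        ENNReal.toReal_mul, ENNReal.toReal_ofReal h1ε.le, ENNReal.toReal_ofReal hε0.le]
    rw [hval]
    set m := (μ S).toReal
    have hd1 : 0 ≤ (1 - ε) * m + ε - aLDG t := by nlinarith
    have hd2 : (1 - ε) * m + ε - aLDG t ≤ ε * (L * fmax + 1) := by nlinarith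
    rw [abs_of_nonneg (div_nonneg hd1 hε0.le), div_le_iff₀ hε0]
    linarith
  have habs : Tendsto (fun ε : ℝ => |(aLDGc ε q - aLDG t) / ε|)
      (nhdsWithin 0 (Set.Ioi 0)) (nhds |l|) := hl.abs
  refine le_of_tendsto habs ?_
  filter_upwards [Ioo_mem_nhdsGT_of_mem (by simp : (0:ℝ) ∈ Set.Ico (0:ℝ) 1)] with ε hε
  exact key ε hε
end

section
/- Under ε-contamination of F by a point mass at (x',y'), the contaminated aLDG statistic satisfies aLDG_t^{(x',y')} ≤ (1-ε)(aLDG_t + L·f_max·ε) + ε, where f_max = sup sqrt(f_X f_Y) and L is the Lipschitz constant of s ↦ aLDG_s at t. -/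
open MeasureTheory

/-- Under `ε`-contamination of `F` by a point mass at `(x', y')`, the contaminated
aLDG statistic satisfies `aLDG_t^{(x',y')} ≤ (1-ε)(aLDG_t + L fmax ε) + ε`. -/
theorem stmt_4
    (fXY : ℝ × ℝ → ℝ) (fX fY : ℝ → ℝ)
    (μ : Measure (ℝ × ℝ)) [IsProbabilityMeasure μ]
    (hμ : μ = (volume : Measure (ℝ × ℝ)).withDensity (fun p => ENNReal.ofReal (fXY p)))
    (t L fmax : ℝ) (ht : 0 < t) (hL : 0 ≤ L)
    (hfmax : ∀ x y, Real.sqrt (fX x * fY y) ≤ fmax)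
    (aLDG : ℝ → ℝ)
    (haLDG : ∀ s : ℝ, aLDG s =
      (μ {p : ℝ × ℝ | (fXY p - fX p.1 * fY p.2) / Real.sqrt (fX p.1 * fY p.2) > s}).toReal)
    (hLip : ∀ ε : ℝ, 0 < ε → |aLDG (t - ε) - aLDG t| ≤ L * ε)
    (ε : ℝ) (hε : 0 < ε) (hε1 : ε < 1) (q : ℝ × ℝ) :
    (((ENNReal.ofReal (1 - ε)) • μ + (ENNReal.ofReal ε) • Measure.dirac q)
        {p : ℝ × ℝ | p = q ∨
          ((1 - ε) * (fXY p - fX p.1 * fY p.2 + ε * (fX p.1 * fY p.2))) /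
            Real.sqrt (((1 - ε) * fX p.1) * ((1 - ε) * fY p.2)) > t}).toReal ≤
      (1 - ε) * (aLDG t + L * fmax * ε) + ε := by
  have h1ε : (0:ℝ) < 1 - ε := by linarith
  have hfmax0 : 0 ≤ fmax := le_trans (Real.sqrt_nonneg _) (hfmax 0 0)
  set S : Set (ℝ × ℝ) := {p : ℝ × ℝ | p = q ∨
      ((1 - ε) * (fXY p - fX p.1 * fY p.2 + ε * (fX p.1 * fY p.2))) /
        Real.sqrt (((1 - ε) * fX p.1) * ((1 - ε) * fY p.2)) > t} with hS
  set A : Set (ℝ × ℝ) := {p : ℝ × ℝ |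
      (fXY p - fX p.1 * fY p.2) / Real.sqrt (fX p.1 * fY p.2) > t - ε * fmax} with hA
  -- set inclusion
  have hsub : S ⊆ {q} ∪ A := by
    intro p hp
    rcases hp with h | h
    · exact Or.inl h
    · right
      set b := fX p.1 * fY p.2 with hb
      set s := Real.sqrt b with hsdef
      have hsqrt : Real.sqrt (((1 - ε) * fX p.1) * ((1 - ε) * fY p.2)) = (1 - ε) * s := by
        rw [show ((1 - ε) * fX p.1) * ((1 - ε) * fY p.2) = (1 - ε) ^ 2 * b by ring,
          Real.sqrt_mul (sq_nonneg _), Real.sqrt_sq h1ε.le]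
      rw [hsqrt] at h
      have h' : (fXY p - b + ε * b) / s > t := by
        rwa [mul_div_mul_left _ _ (ne_of_gt h1ε)] at h
      have hs : 0 < s := by
        rcases lt_or_eq_of_le (Real.sqrt_nonneg b) with hpos | hzero
        · exact hpos
        · exfalso
          rw [← hsdef] at hzero
          rw [← hzero, div_zero] at h'; linarith
      have hbpos : 0 ≤ b := Real.sqrt_pos.mp hs |>.le
      have hss : s * s = b := Real.mul_self_sqrt hbpos
      have hsplit : (fXY p - b + ε * b) / s = (fXY p - b) / s + ε * s := by
        field_simp
        nlinarith [hss]
      rw [hsplit] at h'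
      have hsfmax : s ≤ fmax := hfmax p.1 p.2
      have : (fXY p - b) / s > t - ε * fmax := by nlinarith
      exact this
  -- μ of singleton is zero
  have hq0 : μ {q} = 0 := by
    rw [hμ, withDensity_apply _ (measurableSet_singleton q)]
    rw [Measure.restrict_eq_zero.mpr (measure_singleton q)]
    simp
  have hμS : μ S ≤ μ A := by
    calc μ S ≤ μ ({q} ∪ A) := measure_mono hsub
      _ ≤ μ {q} + μ A := measure_union_le _ _
      _ = μ A := by rw [hq0, zero_add]
  -- evaluate contaminated measure
  have hqS : q ∈ S := Or.inl rfl
  have hev : ((ENNReal.ofReal (1 - ε)) • μ + (ENNReal.ofReal ε) • Measure.dirac q) S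
      = ENNReal.ofReal (1 - ε) * μ S + ENNReal.ofReal ε := by
    simp [Measure.add_apply, Measure.smul_apply, smul_eq_mul,
      Measure.dirac_apply_of_mem hqS]
  rw [hev]
  have hSfin : μ S ≠ ⊤ := measure_ne_top μ S
  have hAfin : μ A ≠ ⊤ := measure_ne_top μ A
  rw [ENNReal.toReal_add (by finiteness) (by finiteness), ENNReal.toReal_mul,
    ENNReal.toReal_ofReal h1ε.le, ENNReal.toReal_ofReal hε.le]
  have h1 : (μ S).toReal ≤ aLDG (t - ε * fmax) := by
    rw [haLDG (t - ε * fmax)]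
    exact ENNReal.toReal_mono hAfin hμS
  have h2 : aLDG (t - ε * fmax) ≤ aLDG t + L * fmax * ε := by
    rcases eq_or_lt_of_le (mul_nonneg hε.le hfmax0) with h0 | hpos
    · have hf0 : fmax = 0 := by
        rcases mul_eq_zero.mp h0.symm with h | h
        · exact absurd h (ne_of_gt hε)
        · exact h
      simp [hf0]
    · have h3 := (abs_le.mp (hLip (ε * fmax) hpos)).2
      have heq : L * (ε * fmax) = L * fmax * ε := by ring
      linarith
  nlinarith [h1, h2]
end

section
/- For the ε-contaminated distribution F' = (1-ε)F + ε δ_{(x',y')} where under F the variables X and Y are independent (so the copula density c_F ≡ 1 on [0,1]²), the contaminated statistic satisfies aLDG_0^{(x',y')} ≥ 1 - ε, and consequently the influence function of aLDG_0 at independence is +∞: lim_{ε→0} (aLDG_0^{(x',y')} - aLDG_0)/ε = ∞. -/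
open MeasureTheory Filter ENNReal

/-- If a (possibly non-measurable) density `g` vanishes on a set `A`, then the
`withDensity` measure of `A` is zero, even for non-measurable `A`. -/
lemma withDensity_zero_on {α : Type*} [MeasurableSpace α] (ν : Measure α) [SFinite ν]
    (g : α → ℝ≥0∞) (A : Set α) (hA : ∀ x ∈ A, g x = 0) : ν.withDensity g A = 0 := by
  set B := toMeasurable ν A with hB
  have hBmeas : MeasurableSet B := measurableSet_toMeasurable ν A
  have hAB : A ⊆ B := subset_toMeasurable ν A
  have hint : ∫⁻ a in B, g a ∂ν = 0 := by
    rw [MeasureTheory.lintegral]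
    refine le_antisymm (iSup₂_le fun φ hφ => ?_) (zero_le)
    rw [← SimpleFunc.lintegral_eq_lintegral]
    have hφ0 : ∀ x ∈ A, φ x = 0 := fun x hx => le_antisymm (by
      simpa [hA x hx] using hφ x) (zero_le)
    have hmeas : MeasurableSet {x | φ x ≠ 0} :=
      (φ.measurableSet_preimage {0}).compl
    have hnull : (ν.restrict B) {x | φ x ≠ 0} = 0 := by
      rw [Measure.restrict_apply hmeas]
      have : ν (B ∩ {x | φ x ≠ 0}) = ν (A ∩ {x | φ x ≠ 0}) :=
        Measure.measure_toMeasurable_inter_of_sFinite hmeas A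
      have hempty : A ∩ {x | φ x ≠ 0} = ∅ := by
        ext x
        simp only [Set.mem_inter_iff, Set.mem_setOf_eq, Set.mem_empty_iff_false,
          iff_false, not_and, not_not]
        exact fun hx => hφ0 x hx
      rw [Set.inter_comm, this, hempty, measure_empty]
    have : (fun x => (φ x : ℝ≥0∞)) =ᵐ[ν.restrict B] 0 := by
      rw [Filter.EventuallyEq, ae_iff]
      convert hnull using 2
      rfl
    exact le_of_eq ((lintegral_eq_zero_iff φ.measurable).mpr this)
  have h1 : ν.withDensity g A ≤ ν.withDensity g B :=
    measure_mono hAB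
  rw [withDensity_apply g hBmeas, hint] at h1
  exact le_antisymm h1 (zero_le)

/-- At independence, the `ε`-contaminated `aLDG_0` statistic is at least `1 - ε`, and
consequently the influence function of `aLDG_0` at independence is `+∞`:
`(aLDG_0^{(x',y')} - aLDG_0)/ε → ∞` as `ε → 0⁺` (note `aLDG_0 = 0` at independence). -/
theorem stmt_17
    (fXY : ℝ × ℝ → ℝ) (fX fY : ℝ → ℝ)
    (μ : Measure (ℝ × ℝ)) [IsProbabilityMeasure μ]
    (hμ : μ = (volume : Measure (ℝ × ℝ)).withDensity (fun p => ENNReal.ofReal (fXY p)))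
    (hindep : ∀ p : ℝ × ℝ, fXY p = fX p.1 * fY p.2)
    (q : ℝ × ℝ)
    (aLDGc : ℝ → ℝ)
    (haLDGc : ∀ ε : ℝ, aLDGc ε =
      (((ENNReal.ofReal (1 - ε)) • μ + (ENNReal.ofReal ε) • Measure.dirac q)
        {p : ℝ × ℝ | p = q ∨
          (1 - ε) * (fXY p - fX p.1 * fY p.2 + ε * (fX p.1 * fY p.2)) > 0}).toReal) :
    (∀ ε : ℝ, 0 < ε → ε < 1 → 1 - ε ≤ aLDGc ε) ∧
      Tendsto (fun ε : ℝ => (aLDGc ε - 0) / ε) (nhdsWithin 0 (Set.Ioi 0)) atTop := by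
  have key : ∀ ε : ℝ, 0 < ε → ε < 1 → aLDGc ε = 1 := by
    intro ε hε hε1
    rw [haLDGc]
    set S : Set (ℝ × ℝ) := {p : ℝ × ℝ | p = q ∨
      (1 - ε) * (fXY p - fX p.1 * fY p.2 + ε * (fX p.1 * fY p.2)) > 0} with hSdef
    have hq : q ∈ S := Or.inl rfl
    have hcompl : μ Sᶜ = 0 := by
      rw [hμ]
      apply withDensity_zero_on
      intro p hp
      simp only [hSdef, Set.mem_compl_iff, Set.mem_setOf_eq, not_or, not_lt] at hp
      have hind := hindep p
      have h0 : fXY p ≤ 0 := by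
        by_contra h
        push_neg at h
        have h2 := hp.2
        rw [← hind] at h2
        nlinarith [mul_pos (mul_pos (sub_pos.mpr hε1) hε) h]
      simpa [ENNReal.ofReal_eq_zero] using h0
    have hS : μ S = 1 := by
      refine le_antisymm prob_le_one ?_
      have : μ Set.univ ≤ μ S + μ Sᶜ := by
        rw [← Set.union_compl_self S]
        exact measure_union_le S Sᶜ
      rwa [measure_univ, hcompl, add_zero] at this
    have hdirac : Measure.dirac q S = 1 := Measure.dirac_apply_of_mem hq
    rw [Measure.add_apply, Measure.smul_apply, Measure.smul_apply, smul_eq_mul,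
      smul_eq_mul, hS, hdirac, mul_one, mul_one,
      ← ENNReal.ofReal_add (by linarith) (le_of_lt hε)]
    norm_num
  constructor
  · intro ε hε hε1
    rw [key ε hε hε1]
    linarith
  · have hev : ∀ᶠ ε in nhdsWithin (0 : ℝ) (Set.Ioi 0),
        ε⁻¹ = (aLDGc ε - 0) / ε := by
      filter_upwards [self_mem_nhdsWithin,
        eventually_nhdsWithin_of_eventually_nhds (eventually_lt_nhds zero_lt_one)]
        with ε hε hε1
      rw [key ε hε hε1]
      simp [one_div]
    exact Tendsto.congr' hev tendsto_inv_nhdsGT_zero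
end
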